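/- For every bounded symmetric measurable kernel W : [0,1]² → ℝ, the operator norm of the associated integral operator T_W is at most four times the cut norm of W, i.e. ‖T_W‖_op ≤ 4‖W‖_□. -/

import Mathlib

open MeasureTheory

/-- Cut norm of a kernel on [0,1]²: supremum over Borel subsets `B₁, B₂ ⊆ [0,1]`
of `|∫_{B₁×B₂} W(u,v) du dv|`. -/
noncomputable def cutNorm (W : ℝ → ℝ → ℝ) : ℝ :=
  sSup { x | ∃ B₁ B₂ : Set ℝ, MeasurableSet B₁ ∧ MeasurableSet B₂ ∧
    B₁ ⊆ Set.Icc 0 1 ∧ B₂ ⊆ Set.Icc 0 1 ∧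
    x = |∫ u in B₁, ∫ v in B₂, W u v| }

/-- Operator norm of the integral operator `T_W`:
`sup_{‖φ‖_∞ ≤ 1} ∫₀¹ |∫₀¹ W(u,v) φ(v) dv| du`. -/
noncomputable def opNorm (W : ℝ → ℝ → ℝ) : ℝ :=
  sSup { x | ∃ φ : ℝ → ℝ, Measurable φ ∧ (∀ v, |φ v| ≤ 1) ∧
    x = ∫ u in Set.Icc (0:ℝ) 1, |∫ v in Set.Icc (0:ℝ) 1, W u v * φ v| }

/-!
Write `f = T_W φ`. Splitting `[0,1]` along the sign of `f` gives `∫ |f| ≤ 2 sup_A |∫_A f|`.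
By Fubini, `∫_A f = ∫ g_A φ` with `g_A v = ∫_A W(u,v) du`, so `|∫_A f| ≤ ∫ |g_A|`, and the same
splitting bounds this by `2 sup_C |∫_C g_A|`, where `∫_C g_A = ∫_A ∫_C W` is at most `‖W‖_□`.
-/

open Set Filter

theorem abs_mul_le_of_abs_le_one {a b C : ℝ} (ha : |a| ≤ C) (hb : |b| ≤ 1) : |a * b| ≤ C :=
  (abs_mul a b).trans_le ((mul_le_of_le_one_right (abs_nonneg a) hb).trans ha)

section General

variable {α β : Type*} [MeasurableSpace α] [MeasurableSpace β] {μ : Measure α} {ν : Measure β}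

theorem setIntegral_abs_le_two_mul_of_abs_setIntegral_le {h : α → ℝ} {S : Set α} {c : ℝ}
    (hS : MeasurableSet S) (hm : Measurable h) (hint : IntegrableOn h S μ)
    (hc : ∀ A, MeasurableSet A → A ⊆ S → |∫ x in A, h x ∂μ| ≤ c) :
    ∫ x in S, |h x| ∂μ ≤ 2 * c := by
  set P := {x | 0 ≤ h x}
  have hP : MeasurableSet P := measurableSet_le measurable_const hm
  have hpos : ∫ x in S ∩ P, |h x| ∂μ = ∫ x in S ∩ P, h x ∂μ :=
    setIntegral_congr_fun (hS.inter hP) fun x hx => abs_of_nonneg hx.2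
  have hneg : ∫ x in S \ P, |h x| ∂μ = -∫ x in S \ P, h x ∂μ := by
    rw [← integral_neg]
    exact setIntegral_congr_fun (hS.diff hP) fun x hx => abs_of_neg (not_le.1 hx.2)
  rw [← integral_inter_add_sdiff hP hint.abs, hpos, hneg]
  have hcP := (le_abs_self _).trans (hc _ (hS.inter hP) inter_subset_left)
  have hcPc := (neg_le_abs _).trans (hc _ (hS.diff hP) sdiff_subset)
  linarith

theorem abs_integral_mul_le_integral_abs {g φ : α → ℝ} (hg : Integrable g μ)
    (hφ : ∀ x, |φ x| ≤ 1) : |∫ x, g x * φ x ∂μ| ≤ ∫ x, |g x| ∂μ :=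
  norm_integral_le_of_norm_le (f := fun x => g x * φ x) hg.abs <| Eventually.of_forall fun x =>
    abs_mul_le_of_abs_le_one le_rfl (hφ x)

theorem integral_integral_swap_of_abs_le [IsFiniteMeasure μ] [IsFiniteMeasure ν]
    {F : α → β → ℝ} (hF : Measurable (Function.uncurry F)) {C : ℝ} (hC : ∀ x y, |F x y| ≤ C) :
    ∫ x, ∫ y, F x y ∂ν ∂μ = ∫ y, ∫ x, F x y ∂μ ∂ν :=
  integral_integral_swap <|
    Integrable.of_bound hF.aestronglyMeasurable C (Eventually.of_forall fun p => hC p.1 p.2)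

end General

theorem isFiniteMeasure_restrict_of_subset_Icc {S : Set ℝ} {a b : ℝ} (hS : S ⊆ Icc a b) :
    IsFiniteMeasure (volume.restrict S) :=
  isFiniteMeasure_restrict.2 ((measure_mono hS).trans_lt measure_Icc_lt_top).ne

theorem integrableOn_Icc_of_abs_le {h : ℝ → ℝ} {a b C : ℝ} (hm : Measurable h)
    (hb : ∀ x, |h x| ≤ C) : IntegrableOn h (Icc a b) :=
  Integrable.of_bound hm.aestronglyMeasurable C (Eventually.of_forall hb)

theorem abs_setIntegral_le_of_subset_unitInterval {h : ℝ → ℝ} {S : Set ℝ} (hS : S ⊆ Icc 0 1)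
    {C : ℝ} (hC : 0 ≤ C) (hb : ∀ x, |h x| ≤ C) : |∫ x in S, h x| ≤ C := by
  have hvol : volume.real S ≤ 1 := by
    simpa using measureReal_mono (μ := volume) hS measure_Icc_lt_top.ne
  calc |∫ x in S, h x| ≤ C * volume.real S :=
        norm_setIntegral_le_of_norm_le_const (f := h)
          ((measure_mono hS).trans_lt measure_Icc_lt_top) fun x _ => hb x
    _ ≤ C := mul_le_of_le_one_right hC hvol

theorem cutNorm_nonneg (W : ℝ → ℝ → ℝ) : 0 ≤ cutNorm W :=
  Real.sSup_nonneg <| by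
    rintro _ ⟨_, _, -, -, -, -, rfl⟩
    exact abs_nonneg _

section CutNorm

variable {W : ℝ → ℝ → ℝ} {M : ℝ}

theorem abs_setIntegral_setIntegral_le_cutNorm (hbdd : ∀ u v, |W u v| ≤ M) {B₁ B₂ : Set ℝ}
    (hB₁ : MeasurableSet B₁) (hB₂ : MeasurableSet B₂) (hB₁I : B₁ ⊆ Icc 0 1)
    (hB₂I : B₂ ⊆ Icc 0 1) : |∫ u in B₁, ∫ v in B₂, W u v| ≤ cutNorm W := by
  refine le_csSup ⟨M, ?_⟩ ⟨B₁, B₂, hB₁, hB₂, hB₁I, hB₂I, rfl⟩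
  rintro _ ⟨B₁, B₂, -, -, hB₁I, hB₂I, rfl⟩
  have hM : 0 ≤ M := (abs_nonneg _).trans (hbdd 0 0)
  exact abs_setIntegral_le_of_subset_unitInterval hB₁I hM fun u =>
    abs_setIntegral_le_of_subset_unitInterval hB₂I hM (hbdd u)

theorem abs_setIntegral_setIntegral_swap_le_cutNorm (hmeas : Measurable (Function.uncurry W))
    (hbdd : ∀ u v, |W u v| ≤ M) {B₁ B₂ : Set ℝ} (hB₁ : MeasurableSet B₁)
    (hB₂ : MeasurableSet B₂) (hB₁I : B₁ ⊆ Icc 0 1) (hB₂I : B₂ ⊆ Icc 0 1) :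
    |∫ v in B₂, ∫ u in B₁, W u v| ≤ cutNorm W := by
  have := isFiniteMeasure_restrict_of_subset_Icc hB₁I
  have := isFiniteMeasure_restrict_of_subset_Icc hB₂I
  rw [← integral_integral_swap_of_abs_le hmeas hbdd]
  exact abs_setIntegral_setIntegral_le_cutNorm hbdd hB₁ hB₂ hB₁I hB₂I

theorem integrableOn_Icc_setIntegral_left (hmeas : Measurable (Function.uncurry W))
    (hbdd : ∀ u v, |W u v| ≤ M) {A : Set ℝ} (hA : A ⊆ Icc 0 1) :
    IntegrableOn (fun v => ∫ u in A, W u v) (Icc 0 1) :=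
  integrableOn_Icc_of_abs_le hmeas.stronglyMeasurable.integral_prod_left'.measurable fun v =>
    abs_setIntegral_le_of_subset_unitInterval hA ((abs_nonneg _).trans (hbdd 0 0))
      fun u => hbdd u v

theorem integral_abs_setIntegral_le_two_mul_cutNorm (hmeas : Measurable (Function.uncurry W))
    (hbdd : ∀ u v, |W u v| ≤ M) {A : Set ℝ} (hA : MeasurableSet A) (hAI : A ⊆ Icc 0 1) :
    ∫ v in Icc 0 1, |∫ u in A, W u v| ≤ 2 * cutNorm W :=
  setIntegral_abs_le_two_mul_of_abs_setIntegral_le measurableSet_Icc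
    hmeas.stronglyMeasurable.integral_prod_left'.measurable
    (integrableOn_Icc_setIntegral_left hmeas hbdd hAI) fun _ hC hCI =>
      abs_setIntegral_setIntegral_swap_le_cutNorm hmeas hbdd hA hC hAI hCI

theorem abs_setIntegral_integral_mul_le_two_mul_cutNorm
    (hmeas : Measurable (Function.uncurry W)) (hbdd : ∀ u v, |W u v| ≤ M) {φ : ℝ → ℝ}
    (hφm : Measurable φ) (hφ : ∀ v, |φ v| ≤ 1) {A : Set ℝ} (hA : MeasurableSet A)
    (hAI : A ⊆ Icc 0 1) :
    |∫ u in A, ∫ v in Icc 0 1, W u v * φ v| ≤ 2 * cutNorm W := by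
  have := isFiniteMeasure_restrict_of_subset_Icc hAI
  have hswap : ∫ u in A, ∫ v in Icc 0 1, W u v * φ v
      = ∫ v in Icc 0 1, (∫ u in A, W u v) * φ v := by
    rw [integral_integral_swap_of_abs_le (hmeas.mul (hφm.comp measurable_snd)) fun u v =>
      abs_mul_le_of_abs_le_one (hbdd u v) (hφ v)]
    simp only [integral_mul_const]
  rw [hswap]
  exact (abs_integral_mul_le_integral_abs (integrableOn_Icc_setIntegral_left hmeas hbdd hAI)
    hφ).trans (integral_abs_setIntegral_le_two_mul_cutNorm hmeas hbdd hA hAI)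

theorem integral_abs_integral_mul_le_four_mul_cutNorm
    (hmeas : Measurable (Function.uncurry W)) (hbdd : ∀ u v, |W u v| ≤ M) {φ : ℝ → ℝ}
    (hφm : Measurable φ) (hφ : ∀ v, |φ v| ≤ 1) :
    ∫ u in Icc 0 1, |∫ v in Icc 0 1, W u v * φ v| ≤ 4 * cutNorm W := by
  have hWφ : Measurable (Function.uncurry fun u v => W u v * φ v) :=
    hmeas.mul (hφm.comp measurable_snd)
  have hTφ : Measurable fun u => ∫ v in Icc 0 1, W u v * φ v :=
    hWφ.stronglyMeasurable.integral_prod_right'.measurable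
  have hTφ_bdd : ∀ u, |∫ v in Icc 0 1, W u v * φ v| ≤ M := fun u =>
    abs_setIntegral_le_of_subset_unitInterval subset_rfl ((abs_nonneg _).trans (hbdd 0 0))
      fun v => abs_mul_le_of_abs_le_one (hbdd u v) (hφ v)
  calc ∫ u in Icc 0 1, |∫ v in Icc 0 1, W u v * φ v| ≤ 2 * (2 * cutNorm W) :=
        setIntegral_abs_le_two_mul_of_abs_setIntegral_le measurableSet_Icc hTφ
          (integrableOn_Icc_of_abs_le hTφ hTφ_bdd) fun _ hA hAI =>
            abs_setIntegral_integral_mul_le_two_mul_cutNorm hmeas hbdd hφm hφ hA hAI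
    _ = 4 * cutNorm W := by ring

end CutNorm

theorem opNorm_le_four_mul_cutNorm_general (W : ℝ → ℝ → ℝ)
    (hmeas : Measurable (Function.uncurry W))
    (M : ℝ) (hbdd : ∀ u v, |W u v| ≤ M) :
    opNorm W ≤ 4 * cutNorm W := by
  refine Real.sSup_le ?_ (by linarith [cutNorm_nonneg W])
  rintro _ ⟨φ, hφm, hφ, rfl⟩
  exact integral_abs_integral_mul_le_four_mul_cutNorm hmeas hbdd hφm hφ

theorem opNorm_le_four_mul_cutNorm (W : ℝ → ℝ → ℝ)
    (hmeas : Measurable (Function.uncurry W))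
    (hsym : ∀ u v, W u v = W v u)
    (M : ℝ) (hbdd : ∀ u v, |W u v| ≤ M) :
    opNorm W ≤ 4 * cutNorm W :=
  opNorm_le_four_mul_cutNorm_general W hmeas M hbdd
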